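/- arXiv:2401.08223 — 11 statements merged into one kernel-verified Lean document; each statement's English description precedes it below -/
import Mathlib

section
/- Let D : A → M be a derivation and P : M → A an integration satisfying FTC2, i.e., for each a ∈ A there exists c_a ∈ ker(D) with P(D(a)) = a − c_a and c_{ab} = c_a·c_b. Then the map E : A → A defined by E(a) = a − P(D(a)) is an idempotent k-algebra homomorphism with D ∘ E = 0. -/
theorem FTC2_gives_idempotent_algebra_hom
    (k A M : Type*) [CommRing k] [CommRing A] [Algebra k A]
    [AddCommGroup M] [Module k M] [Module A M] [IsScalarTower k A M]
    (D : A →ₗ[k] M) (P : M →ₗ[k] A)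
    (hLeib : ∀ a b : A, D (a * b) = a • D b + b • D a)
    (hRB : ∀ m n : M, P m * P n = P (P m • n) + P (P n • m))
    (c : A → A)
    (hc_ker : ∀ a : A, D (c a) = 0)
    (hFTC2 : ∀ a : A, P (D a) = a - c a)
    (hc_mul : ∀ a b : A, c (a * b) = c a * c b) :
    (∀ a : A, (fun x => x - P (D x)) ((fun x => x - P (D x)) a)
        = (fun x => x - P (D x)) a) ∧
    ((fun x => x - P (D x)) (1 : A) = 1) ∧
    (∀ a b : A, (fun x => x - P (D x)) (a * b)
        = (fun x => x - P (D x)) a * (fun x => x - P (D x)) b) ∧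
    (∀ a b : A, (fun x => x - P (D x)) (a + b)
        = (fun x => x - P (D x)) a + (fun x => x - P (D x)) b) ∧
    (∀ (r : k) (a : A), (fun x => x - P (D x)) (r • a)
        = r • (fun x => x - P (D x)) a) ∧
    (∀ a : A, D ((fun x => x - P (D x)) a) = 0) := by
  have hE : ∀ a : A, a - P (D a) = c a := by
    intro a; rw [hFTC2]; ring
  have hD1 : D (1 : A) = 0 := by
    have := hLeib 1 1
    simp at this
    simpa using this
  refine ⟨?_, ?_, ?_, ?_, ?_, ?_⟩
  · intro a
    simp only [hE a, hc_ker, map_zero]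
    simp
  · simp [hD1]
  · intro a b
    simp only [hE, hc_mul]
  · intro a b
    simp only
    rw [map_add, map_add]; ring
  · intro r a
    simp only
    rw [map_smul, map_smul, smul_sub]
  · intro a
    simp only [hE a, hc_ker]
end

section
/- Let D : A → M be a derivation and P : M → A an integration. If the map E(a) := a − P(D(a)) is an idempotent k-algebra homomorphism with D ∘ E = 0, then D ∘ P ∘ D = D and the hybrid Rota–Baxter rule holds: P(D(a))·P(D(b)) + P(D(ab)) = a·P(D(b)) + b·P(D(a)) for all a,b ∈ A. -/
theorem idempotent_hom_gives_hybrid_RotaBaxter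
    (k A M : Type*) [CommRing k] [CommRing A] [Algebra k A]
    [AddCommGroup M] [Module k M] [Module A M] [IsScalarTower k A M]
    (D : A →ₗ[k] M) (P : M →ₗ[k] A)
    (hLeib : ∀ a b : A, D (a * b) = a • D b + b • D a)
    (hRB : ∀ m n : M, P m * P n = P (P m • n) + P (P n • m))
    (hE_idem : ∀ a : A, (a - P (D a)) - P (D (a - P (D a))) = a - P (D a))
    (hE_one : (1 : A) - P (D 1) = 1)
    (hE_mul : ∀ a b : A, (a * b) - P (D (a * b)) = (a - P (D a)) * (b - P (D b)))
    (hDE : ∀ a : A, D (a - P (D a)) = 0) :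
    (∀ a : A, D (P (D a)) = D a) ∧
    (∀ a b : A, P (D a) * P (D b) + P (D (a * b)) = a * P (D b) + b * P (D a)) := by
  constructor
  · intro a
    have h := hDE a
    rw [map_sub] at h
    exact (sub_eq_zero.mp h).symm
  · intro a b
    have h := hE_mul a b
    ring_nf at h ⊢
    linear_combination -h
end

section
/- Let D : A → M be a derivation and P : M → A a k-linear map such that D ∘ P = id_M and the hybrid Rota–Baxter rule P(D(a))·P(D(b)) + P(D(ab)) = a·P(D(b)) + b·P(D(a)) holds. Then P is an integration, i.e., P(m)·P(n) = P(P(m)·n) + P(P(n)·m) for all m,n ∈ M. -/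
theorem FTC1_and_hybrid_gives_integration
    (k A M : Type*) [CommRing k] [CommRing A] [Algebra k A]
    [AddCommGroup M] [Module k M] [Module A M] [IsScalarTower k A M]
    (D : A →ₗ[k] M) (P : M →ₗ[k] A)
    (hLeib : ∀ a b : A, D (a * b) = a • D b + b • D a)
    (hFTC1 : ∀ m : M, D (P m) = m)
    (hHyb : ∀ a b : A, P (D a) * P (D b) + P (D (a * b)) = a * P (D b) + b * P (D a)) :
    ∀ m n : M, P m * P n = P (P m • n) + P (P n • m) := by
  intro m n
  have h := hHyb (P m) (P n)
  rw [hLeib (P m) (P n), hFTC1 m, hFTC1 n, map_add] at h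
  linear_combination -h
end

section
/- An FTC-pair (D : A → M, P : M → A) is augmented (i.e., the canonical map k → ker(D) is a ring isomorphism) if and only if A admits a k-algebra homomorphism (augmentation) e : A → k such that u(e(a)) = a − P(D(a)) for all a ∈ A, where u : k → A is the structure map. -/
theorem augmented_FTC_pair_iff_augmentation
    (k A M : Type*) [CommRing k] [CommRing A] [Algebra k A]
    [AddCommGroup M] [Module k M] [Module A M] [IsScalarTower k A M]
    (D : A →ₗ[k] M) (P : M →ₗ[k] A)
    (hLeib : ∀ a b : A, D (a * b) = a • D b + b • D a)
    (hRB : ∀ m n : M, P m * P n = P (P m • n) + P (P n • m))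
    (hFTC1 : ∀ m : M, D (P m) = m)
    (c : A → A)
    (hc_ker : ∀ a : A, D (c a) = 0)
    (hFTC2 : ∀ a : A, P (D a) = a - c a)
    (hc_mul : ∀ a b : A, c (a * b) = c a * c b) :
    (∀ a : A, D a = 0 → ∃! r : k, algebraMap k A r = a) ↔
      (∃ e : A →ₐ[k] k, ∀ a : A, algebraMap k A (e a) = a - P (D a)) := by
  have hD1 : D 1 = 0 := by
    have h1 := hLeib 1 1
    simp only [one_mul, one_smul] at h1
    exact (left_eq_add.mp h1)
  have hc_eq : ∀ a : A, c a = a - P (D a) := by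
    intro a
    rw [hFTC2, sub_sub_cancel]
  have hDalg : ∀ r : k, D (algebraMap k A r) = 0 := by
    intro r
    rw [Algebra.algebraMap_eq_smul_one, map_smul, hD1, smul_zero]
  have hc_alg : ∀ r : k, c (algebraMap k A r) = algebraMap k A r := by
    intro r
    rw [hc_eq, hDalg, map_zero, sub_zero]
  constructor
  · intro h
    choose f hf using h
    set e : A → k := fun a => f (c a) (hc_ker a) with he_def
    have spec : ∀ a : A, algebraMap k A (e a) = c a := fun a => (hf (c a) (hc_ker a)).1
    have uniq : ∀ (a : A) (r : k), algebraMap k A r = c a → r = e a :=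
      fun a r hr => (hf (c a) (hc_ker a)).2 r hr
    have c_add : ∀ a b : A, c (a + b) = c a + c b := by
      intro a b
      rw [hc_eq, hc_eq, hc_eq, map_add, map_add]
      ring
    refine ⟨{ toFun := e,
              map_one' := ?_,
              map_mul' := ?_,
              map_zero' := ?_,
              map_add' := ?_,
              commutes' := ?_ }, ?_⟩
    · refine (uniq 1 1 ?_).symm
      rw [map_one, hc_eq, hD1, map_zero, sub_zero]
    · intro x y
      refine (uniq (x * y) (e x * e y) ?_).symm
      rw [map_mul, spec x, spec y, hc_mul]
    · refine (uniq 0 0 ?_).symm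
      rw [map_zero, hc_eq, map_zero, map_zero, sub_zero]
    · intro x y
      refine (uniq (x + y) (e x + e y) ?_).symm
      rw [map_add, spec x, spec y, c_add]
    · intro r
      have : r = e (algebraMap k A r) := uniq _ r (hc_alg r).symm
      simpa using this.symm
    · intro a
      exact (spec a).trans (hc_eq a)
  · rintro ⟨e, he⟩ a ha
    refine ⟨e a, ?_, ?_⟩
    · show algebraMap k A (e a) = a
      rw [he a, ha, map_zero, sub_zero]
    · intro r hr
      have h1 := e.commutes r
      rw [hr] at h1
      simpa using h1.symm
end

section
/- If P : M → A is an integration (P k-linear with P(m)P(n) = P(P(m)n) + P(P(n)m)), then the operation m ◁ n := P(n)·m makes M a Zinbiel algebra over k, i.e., ◁ is k-bilinear and satisfies (x ◁ y) ◁ z = x ◁ (y ◁ z) + x ◁ (z ◁ y). -/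
theorem integration_gives_zinbiel
    (k A M : Type*) [CommRing k] [CommRing A] [Algebra k A]
    [AddCommGroup M] [Module k M] [Module A M] [IsScalarTower k A M]
    (P : M →ₗ[k] A)
    (hRB : ∀ m n : M, P m * P n = P (P m • n) + P (P n • m)) :
    (∀ m m' n : M, P n • (m + m') = P n • m + P n • m') ∧
    (∀ m n n' : M, P (n + n') • m = P n • m + P n' • m) ∧
    (∀ (r : k) (m n : M), P n • (r • m) = r • (P n • m)) ∧
    (∀ (r : k) (m n : M), P (r • n) • m = r • (P n • m)) ∧
    (∀ x y z : M, P z • (P y • x) = P (P z • y) • x + P (P y • z) • x) := by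
  refine ⟨fun m m' n => smul_add _ _ _,
    fun m n n' => by rw [map_add, add_smul],
    fun r m n => smul_comm _ _ _,
    fun r m n => by rw [map_smul, smul_assoc],
    fun x y z => by rw [← mul_smul, hRB, add_smul]⟩
end

section
/- Let (D : A → M, P : M → A) be an FTC-pair. Then the integration P is ker(D)-linear: for all c ∈ ker(D) and n ∈ M, P(c·n) = c·P(n). -/
theorem FTC_pair_integration_ker_linear
    (k A M : Type*) [CommRing k] [CommRing A] [Algebra k A]
    [AddCommGroup M] [Module k M] [Module A M] [IsScalarTower k A M]
    (D : A →ₗ[k] M) (P : M →ₗ[k] A)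
    (hLeib : ∀ a b : A, D (a * b) = a • D b + b • D a)
    (hRB : ∀ m n : M, P m * P n = P (P m • n) + P (P n • m))
    (hFTC1 : ∀ m : M, D (P m) = m)
    (c : A → A)
    (hc_ker : ∀ a : A, D (c a) = 0)
    (hFTC2 : ∀ a : A, P (D a) = a - c a)
    (hc_mul : ∀ a b : A, c (a * b) = c a * c b) :
    ∀ (x : A) (n : M), D x = 0 → P (x • n) = x * P n := by
  intro x n hx
  have hcP : c (P n) = 0 := by
    have h := hFTC2 (P n)
    rw [hFTC1] at h
    exact sub_eq_self.mp h.symm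
  have hD : D (x * P n) = x • n := by
    rw [hLeib, hFTC1, hx, smul_zero, add_zero]
  have h2 := hFTC2 (x * P n)
  rw [hD, hc_mul, hcP, mul_zero, sub_zero] at h2
  exact h2
end

section
/- Let (D : A → M, P : M → A) be an FTC-pair. Then M with operation m ◁ n := P(n)·m is a Zinbiel algebra over the subalgebra ker(D); in particular, ◁ is ker(D)-bilinear: c·(m ◁ n) = (c·m) ◁ n = m ◁ (c·n) for all c ∈ ker(D). -/
theorem FTC_pair_gives_kerD_zinbiel
    (k A M : Type*) [CommRing k] [CommRing A] [Algebra k A]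
    [AddCommGroup M] [Module k M] [Module A M] [IsScalarTower k A M]
    (D : A →ₗ[k] M) (P : M →ₗ[k] A)
    (hLeib : ∀ a b : A, D (a * b) = a • D b + b • D a)
    (hRB : ∀ m n : M, P m * P n = P (P m • n) + P (P n • m))
    (hFTC1 : ∀ m : M, D (P m) = m)
    (c : A → A)
    (hc_ker : ∀ a : A, D (c a) = 0)
    (hFTC2 : ∀ a : A, P (D a) = a - c a)
    (hc_mul : ∀ a b : A, c (a * b) = c a * c b) :
    (∀ x y z : M, P z • (P y • x) = P (P z • y) • x + P (P y • z) • x) ∧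
    (∀ (x : A) (m n : M), D x = 0 →
      x • (P n • m) = P n • (x • m) ∧ x • (P n • m) = P (x • n) • m) := by
  have hcP : ∀ m : M, c (P m) = 0 := by
    intro m
    have h := hFTC2 (P m)
    rw [hFTC1] at h
    exact sub_eq_self.mp h.symm
  constructor
  · intro x y z
    rw [smul_smul, hRB, add_smul, add_comm]
  · intro x m n hx
    constructor
    · rw [smul_smul, smul_smul, mul_comm]
    · have hD : D (x * P n) = x • n := by
        rw [hLeib, hFTC1, hx, smul_zero, add_zero]
      have hP : P (x • n) = x * P n := by
        rw [← hD, hFTC2, hc_mul, hcP, mul_zero, sub_zero]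
      rw [hP, smul_smul]
end

section
/- Let Z be an A-Zinbiel algebra. The action (a,x)·y := a·y + y◁x makes Z a module over the algebra A ⋊ Z, where A ⋊ Z = A × Z with product (a,x)(b,y) = (ab, a·y + b·x + x◁y + y◁x). -/
theorem zinbiel_module_over_semidirect_product
    (k A Z : Type*) [CommRing k] [CommRing A] [Algebra k A]
    [AddCommGroup Z] [Module k Z] [Module A Z] [IsScalarTower k A Z]
    (op : Z → Z → Z)
    (h_add_left : ∀ x y z : Z, op (x + y) z = op x z + op y z)
    (h_add_right : ∀ x y z : Z, op x (y + z) = op x y + op x z)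
    (h_smul_left : ∀ (a : A) (x y : Z), op (a • x) y = a • op x y)
    (h_smul_right : ∀ (a : A) (x y : Z), op x (a • y) = a • op x y)
    (hZinbiel : ∀ x y z : Z, op (op x y) z = op x (op y z) + op x (op z y))
    (mul : A × Z → A × Z → A × Z)
    (hmul : ∀ p q : A × Z,
      mul p q = (p.1 * q.1, p.1 • q.2 + q.1 • p.2 + (op p.2 q.2 + op q.2 p.2)))
    (act : A × Z → Z → Z)
    (hact : ∀ (p : A × Z) (y : Z), act p y = p.1 • y + op y p.2) :
    (∀ y : Z, act ((1 : A), (0 : Z)) y = y) ∧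
    (∀ (p q : A × Z) (y : Z), act (mul p q) y = act p (act q y)) ∧
    (∀ (p : A × Z) (y z : Z), act p (y + z) = act p y + act p z) ∧
    (∀ (p q : A × Z) (y : Z), act (p + q) y = act p y + act q y) := by
  have hz : ∀ x : Z, op x 0 = 0 := by
    intro x
    have := h_add_right x 0 0
    simp at this
    linear_combination (norm := abel) this
  refine ⟨?_, ?_, ?_, ?_⟩
  · intro y; simp [hact, hz]
  · intro p q y
    simp only [hact, hmul, mul_smul, h_add_right, h_smul_right, h_add_left,
      h_smul_left, smul_add, hZinbiel]
    abel
  · intro p y z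
    simp only [hact, h_add_left, smul_add]
    abel
  · intro p q y
    simp only [hact, h_add_right, Prod.fst_add, Prod.snd_add, add_smul]
    abel
end

section
/- Let (D : A → M, P : M → A) be an FTC-pair with E(a) := a − P(D(a)). Then the map η₁ : A → ker(D) ⋊ M defined by η₁(a) = (E(a), D(a)) is a k-algebra isomorphism, with inverse (c,m) ↦ c + P(m), where ker(D) ⋊ M carries the product (c,m)(d,n) = (cd, c·n + d·m + P(n)·m + P(m)·n). -/
theorem eta_is_algebra_isomorphism
    (k A M : Type*) [CommRing k] [CommRing A] [Algebra k A]
    [AddCommGroup M] [Module k M] [Module A M] [IsScalarTower k A M]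
    (D : A →ₗ[k] M) (P : M →ₗ[k] A)
    (hLeib : ∀ a b : A, D (a * b) = a • D b + b • D a)
    (hRB : ∀ m n : M, P m * P n = P (P m • n) + P (P n • m))
    (hFTC1 : ∀ m : M, D (P m) = m)
    (c : A → A)
    (hc_ker : ∀ a : A, D (c a) = 0)
    (hFTC2 : ∀ a : A, P (D a) = a - c a)
    (hc_mul : ∀ a b : A, c (a * b) = c a * c b)
    (mul : A × M → A × M → A × M)
    (hmul : ∀ p q : A × M,
      mul p q = (p.1 * q.1, p.1 • q.2 + q.1 • p.2 + (P q.2 • p.2 + P p.2 • q.2)))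
    (η : A → A × M)
    (hη : ∀ a : A, η a = (a - P (D a), D a)) :
    -- η lands in ker(D) × M
    (∀ a : A, D (η a).1 = 0) ∧
    -- η is a k-algebra homomorphism
    (η 1 = ((1 : A), (0 : M))) ∧
    (∀ a b : A, η (a * b) = mul (η a) (η b)) ∧
    (∀ a b : A, η (a + b) = η a + η b) ∧
    (∀ (r : k) (a : A), η (r • a) = r • η a) ∧
    -- (c,m) ↦ c + P m is a two-sided inverse on ker(D) × M
    (∀ a : A, (η a).1 + P (η a).2 = a) ∧
    (∀ (x : A) (m : M), D x = 0 → η (x + P m) = (x, m)) := by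
  have hD1 : D 1 = 0 := by
    have h := hLeib 1 1
    simp only [one_mul, one_smul] at h
    have : D 1 + D 1 = D 1 + 0 := by rw [add_zero, ← h]
    exact (add_left_cancel this)
  refine ⟨?_, ?_, ?_, ?_, ?_, ?_, ?_⟩
  · intro a
    rw [hη a]
    simp [hFTC1]
  · rw [hη 1, hD1]
    simp
  · intro a b
    rw [hmul, hη a, hη b, hη (a * b)]
    have hE : ∀ x : A, x - P (D x) = c x := by
      intro x; rw [hFTC2]; ring
    refine Prod.ext ?_ ?_
    · simp only
      rw [hE a, hE b, hE (a * b), hc_mul]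
    · simp only
      rw [hLeib a b, hFTC2 a, hFTC2 b]
      simp only [sub_smul, smul_sub]
      abel
  · intro a b
    rw [hη a, hη b, hη (a + b)]
    simp only [map_add, Prod.mk_add_mk]
    refine Prod.ext ?_ rfl
    simp only
    ring
  · intro r a
    rw [hη a, hη (r • a)]
    simp only [map_smul, Prod.smul_mk, smul_sub]
  · intro a
    rw [hη a]
    simp
  · intro x m hx
    rw [hη (x + P m)]
    simp [hx, hFTC1]
end

section
/- Let D : A → A be a derivation on a commutative k-algebra A and E : A → A an idempotent k-algebra homomorphism with D ∘ E = 0 and E ∘ D = 0. If K := D + E is bijective, then K⁻¹ ∘ E = E, and the restriction P of K⁻¹ to ker(E) is an integration: P(x)·P(y) = P(P(x)·y) + P(P(y)·x) for all x,y ∈ ker(E). -/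
theorem derivation_idempotent_gives_integration
    (k A : Type*) [CommRing k] [CommRing A] [Algebra k A]
    (D : A →ₗ[k] A)
    (hLeib : ∀ a b : A, D (a * b) = a * D b + b * D a)
    (E : A →ₐ[k] A)
    (hE_idem : ∀ a : A, E (E a) = E a)
    (hDE : ∀ a : A, D (E a) = 0)
    (hED : ∀ a : A, E (D a) = 0)
    (hK : Function.Bijective (fun a : A => D a + E a)) :
    (∀ a : A, Function.invFun (fun a : A => D a + E a) (E a) = E a) ∧
    (∀ x y : A, E x = 0 → E y = 0 →
      Function.invFun (fun a : A => D a + E a) x *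
        Function.invFun (fun a : A => D a + E a) y =
      Function.invFun (fun a : A => D a + E a)
          (Function.invFun (fun a : A => D a + E a) x * y) +
      Function.invFun (fun a : A => D a + E a)
          (Function.invFun (fun a : A => D a + E a) y * x)) := by
  set K : A → A := fun a : A => D a + E a with hKdef
  have hright : ∀ a, K (Function.invFun K a) = a :=
    fun a => Function.rightInverse_invFun hK.surjective a
  have hinj := hK.injective
  -- E of invFun of something in ker E is 0, and D of it is the element itself
  have hEP : ∀ a : A, E a = 0 → E (Function.invFun K a) = 0 := by
    intro a ha
    have h1 := congrArg E (hright a)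
    simp only [hKdef, map_add, hED, hE_idem, zero_add] at h1
    rw [h1, ha]
  have hDP : ∀ a : A, E a = 0 → D (Function.invFun K a) = a := by
    intro a ha
    have h1 := hright a
    have h2 := hEP a ha
    simp only [hKdef] at h1
    rw [h2, add_zero] at h1
    exact h1
  constructor
  · intro a
    apply hinj
    rw [hright (E a)]
    show E a = K (E a)
    simp [hKdef, hDE a, hE_idem a]
  · intro x y hx hy
    apply hinj
    rw [show K (Function.invFun K (Function.invFun K x * y) +
        Function.invFun K (Function.invFun K y * x)) =
        K (Function.invFun K (Function.invFun K x * y)) +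
        K (Function.invFun K (Function.invFun K y * x)) by
      simp [hKdef, map_add]; ring]
    rw [hright, hright]
    show D _ + E _ = _
    rw [hLeib, map_mul, hEP x hx, hEP y hy, hDP x hx, hDP y hy]
    ring
end

section
/- Let D : A → A be a derivation and E : A → A an idempotent k-algebra homomorphism with D ∘ E = 0 = E ∘ D and K := D + E bijective. Then the pair (D̃ : A → ker(E), P := K⁻¹|_{ker(E)} : ker(E) → A), where D̃(a) = D(a), satisfies FTC1 and FTC2: D(P(x)) = x for all x ∈ ker(E), and P(D(a)) = a − E(a) with E(a) ∈ ker(D) and E(ab) = E(a)E(b). -/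
theorem derivation_idempotent_gives_FTC_pair
    (k A : Type*) [CommRing k] [CommRing A] [Algebra k A]
    (D : A →ₗ[k] A)
    (hLeib : ∀ a b : A, D (a * b) = a * D b + b * D a)
    (E : A →ₐ[k] A)
    (hE_idem : ∀ a : A, E (E a) = E a)
    (hDE : ∀ a : A, D (E a) = 0)
    (hED : ∀ a : A, E (D a) = 0)
    (hK : Function.Bijective (fun a : A => D a + E a)) :
    -- FTC1
    (∀ x : A, E x = 0 → D (Function.invFun (fun a : A => D a + E a) x) = x) ∧
    -- FTC2
    (∀ a : A, Function.invFun (fun a : A => D a + E a) (D a) = a - E a) ∧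
    (∀ a : A, D (E a) = 0) ∧
    (∀ a b : A, E (a * b) = E a * E b) := by
  have hleft := Function.leftInverse_invFun hK.injective
  have hright := Function.rightInverse_invFun hK.surjective
  refine ⟨?_, ?_, hDE, fun a b => map_mul E a b⟩
  · intro x hx
    set y := Function.invFun (fun a : A => D a + E a) x with hy
    have hKy : D y + E y = x := hright x
    have hEy : E y = 0 := by
      have := congrArg E hKy
      simp [map_add, hED, hE_idem, hx] at this
      exact this
    rw [hEy, add_zero] at hKy
    exact hKy
  · intro a
    have : (fun a : A => D a + E a) (a - E a) = D a := by
      simp [map_sub, hDE, hE_idem]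
    calc Function.invFun (fun a : A => D a + E a) (D a)
        = Function.invFun (fun a : A => D a + E a)
            ((fun a : A => D a + E a) (a - E a)) := by rw [this]
      _ = a - E a := hleft _
end
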